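/- The averaging operator 𝒰^b_ε is a left inverse of the boundary unfolding operator T^b_ε: for every φ ∈ L^p(S_ε), 𝒰^b_ε(T^b_ε(φ)) = φ a.e. on S_ε. -/

import Mathlib

open MeasureTheory ENNReal Filter Topology Classical

noncomputable section

/-- Points of `ℝ³`. -/
abbrev V3 : Type := Fin 3 → ℝ

/-- The open reference cell `Y = (0,1)³`. -/
def Ycube : Set V3 := {y | ∀ i, 0 < y i ∧ y i < 1}

/-- The open cell `εξ + εY`. -/
def cellOf (ε : ℝ) (ξ : Fin 3 → ℤ) : Set V3 :=
  {x | ∀ i, ε * (ξ i : ℝ) < x i ∧ x i < ε * (ξ i : ℝ) + ε}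

/-- `Ξ_ε = {ξ ∈ ℤ³ : εξ + εY ⊆ Ω}`. -/
def Xi (ε : ℝ) (Ω : Set V3) : Set (Fin 3 → ℤ) := {ξ | cellOf ε ξ ⊆ Ω}

/-- `Ω̂_ε`, the interior of the union of the closed cells contained in `Ω`. -/
def OmHat (ε : ℝ) (Ω : Set V3) : Set V3 :=
  interior (⋃ ξ ∈ Xi ε Ω, closure (cellOf ε ξ))

/-- `ε[x/ε]`, componentwise. -/
def floorPt (ε : ℝ) (x : V3) : V3 := fun i => ε * (⌊x i / ε⌋ : ℝ)

/-- `{x/ε}`, the fractional part, componentwise. -/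
def fracPt (ε : ℝ) (x : V3) : V3 := fun i => x i / ε - (⌊x i / ε⌋ : ℝ)

/-- The (boundary) unfolding operator `T_ε(φ)(x,y) = φ(ε[x/ε] + εy)` on `Ω̂_ε`, `0` elsewhere. -/
def unfoldOp {α : Type*} [Zero α] (ε : ℝ) (Ω : Set V3) (φ : V3 → α) : V3 × V3 → α :=
  fun p => if p.1 ∈ OmHat ε Ω then φ (floorPt ε p.1 + ε • p.2) else 0

/-- `S_ε = {x ∈ Ω̂_ε : {x/ε} ∈ S}`. -/
def Seps (ε : ℝ) (Ω : Set V3) (S : Set V3) : Set V3 :=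
  {x ∈ OmHat ε Ω | fracPt ε x ∈ S}

/-- The cracked domain `Ω*_ε = Ω \ S_ε`. -/
def OmStar (ε : ℝ) (Ω S : Set V3) : Set V3 := Ω \ Seps ε Ω S

/-- The averaging (boundary) operator
`𝒰^b_ε(Φ)(x) = ∫_Y Φ(ε[x/ε]+εz, {x/ε}) dz` on `Ω̂_ε`, `0` elsewhere. -/
def avgOp (ε : ℝ) (Ω : Set V3) (Φ : V3 × V3 → ℝ) : V3 → ℝ :=
  fun x => if x ∈ OmHat ε Ω then ∫ z in Ycube, Φ (floorPt ε x + ε • z, fracPt ε x) else 0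

/-!
A point `x ∈ S_ε` lies in a closed cell `ε(ξ + Ȳ)` contained in `Ω̂_ε`, and since its fractional
part `{x/ε}` lies in the open cube `Y`, in fact `[x/ε] = ξ`, so the open cell `ε([x/ε] + Y)` lies
in `Ω̂_ε`. For `z ∈ Y` the point `ε[x/ε] + εz` stays in that open cell and has integer part
`[x/ε]`, hence `T_ε φ (ε[x/ε] + εz, {x/ε}) = φ(ε[x/ε] + ε{x/ε}) = φ x`. The integrand defining
`𝒰_ε(T_ε φ)(x)` is therefore constant, and `|Y| = 1`.
-/

lemma Ycube_eq_pi : Ycube = Set.univ.pi fun _ : Fin 3 => Set.Ioo (0 : ℝ) 1 := by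
  ext y; simp [Ycube, Set.mem_pi]

lemma cellOf_eq_pi (ε : ℝ) (ξ : Fin 3 → ℤ) :
    cellOf ε ξ = Set.univ.pi fun i => Set.Ioo (ε * ξ i) (ε * ξ i + ε) := by
  ext x; simp [cellOf, Set.mem_pi]

lemma measurableSet_Ycube : MeasurableSet Ycube := by
  rw [Ycube_eq_pi]; exact MeasurableSet.univ_pi fun _ => measurableSet_Ioo

lemma volume_Ycube : volume Ycube = 1 := by
  simp [Ycube_eq_pi, volume_pi_pi, Real.volume_Ioo]

lemma isOpen_cellOf (ε : ℝ) (ξ : Fin 3 → ℤ) : IsOpen (cellOf ε ξ) := by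
  rw [cellOf_eq_pi]; exact isOpen_set_pi Set.finite_univ fun _ _ => isOpen_Ioo

lemma closure_cellOf_subset (ε : ℝ) (ξ : Fin 3 → ℤ) :
    closure (cellOf ε ξ) ⊆ Set.univ.pi fun i => Set.Icc (ε * ξ i) (ε * ξ i + ε) :=
  closure_minimal (by rw [cellOf_eq_pi]; exact Set.pi_mono fun _ _ => Set.Ioo_subset_Icc_self)
    (isClosed_set_pi fun _ _ => isClosed_Icc)

lemma measurable_fracPt (ε : ℝ) : Measurable (fracPt ε) :=
  measurable_pi_lambda _ fun i => measurable_fract.comp (by fun_prop)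

lemma measurableSet_Seps (ε : ℝ) (Ω : Set V3) {S : Set V3} (hS : MeasurableSet S) :
    MeasurableSet (Seps ε Ω S) :=
  isOpen_interior.measurableSet.inter (measurable_fracPt ε hS)

lemma floorPt_add_smul_fracPt {ε : ℝ} (hε : ε ≠ 0) (x : V3) :
    floorPt ε x + ε • fracPt ε x = x := by
  funext i
  simp only [floorPt, fracPt, Pi.add_apply, Pi.smul_apply, smul_eq_mul]
  field_simp
  ring

lemma floorPt_floorPt_add_smul {ε : ℝ} (hε : ε ≠ 0) (x : V3) {z : V3} (hz : z ∈ Ycube) :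
    floorPt ε (floorPt ε x + ε • z) = floorPt ε x := by
  funext i
  simp only [floorPt, Pi.add_apply, Pi.smul_apply, smul_eq_mul]
  have hdiv : (ε * ⌊x i / ε⌋ + ε * z i) / ε = ⌊x i / ε⌋ + z i := by field_simp
  rw [hdiv, Int.floor_intCast_add, Int.floor_eq_zero_iff.2 ⟨(hz i).1.le, (hz i).2⟩, add_zero]

lemma floorPt_add_smul_mem_cellOf {ε : ℝ} (hε : 0 < ε) (x : V3) {z : V3} (hz : z ∈ Ycube) :
    floorPt ε x + ε • z ∈ cellOf ε (fun i => ⌊x i / ε⌋) := fun i =>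
  ⟨by simpa [floorPt] using mul_pos hε (hz i).1,
    by simpa [floorPt] using mul_lt_mul_of_pos_left (hz i).2 hε⟩

lemma Int.floor_eq_of_mem_Icc_of_fract_pos {r : ℝ} {k : ℤ} (hr : r ∈ Set.Icc (k : ℝ) (k + 1))
    (hfract : 0 < Int.fract r) : ⌊r⌋ = k := by
  refine Int.floor_eq_iff.2 ⟨hr.1, lt_of_le_of_ne hr.2 fun hk => ?_⟩
  rw [hk, ← Int.cast_one, ← Int.cast_add, Int.fract_intCast] at hfract
  exact hfract.false

lemma floor_div_eq_of_mem_closure_cellOf {ε : ℝ} (hε : 0 < ε) {ξ : Fin 3 → ℤ} {x : V3}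
    (hx : x ∈ closure (cellOf ε ξ)) (hfrac : fracPt ε x ∈ Ycube) :
    (fun i => ⌊x i / ε⌋) = ξ := by
  funext i
  obtain ⟨hlo, hhi⟩ := closure_cellOf_subset ε ξ hx i (Set.mem_univ i)
  refine Int.floor_eq_of_mem_Icc_of_fract_pos ⟨?_, ?_⟩ (hfrac i).1
  · rwa [le_div_iff₀ hε, mul_comm]
  · rw [div_le_iff₀ hε]; linarith

lemma cellOf_floor_subset_OmHat {ε : ℝ} (hε : 0 < ε) {Ω : Set V3} {x : V3}
    (hx : x ∈ OmHat ε Ω) (hfrac : fracPt ε x ∈ Ycube) :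
    cellOf ε (fun i => ⌊x i / ε⌋) ⊆ OmHat ε Ω := by
  obtain ⟨ξ, hξ, hxξ⟩ := Set.mem_iUnion₂.1 (interior_subset hx)
  rw [floor_div_eq_of_mem_closure_cellOf hε hxξ hfrac]
  exact interior_maximal (fun y hy => Set.mem_biUnion hξ (subset_closure hy)) (isOpen_cellOf ε ξ)

lemma avgOp_unfoldOp_apply {ε : ℝ} (hε : 0 < ε) (Ω : Set V3) (φ : V3 → ℝ) {x : V3}
    (hx : x ∈ OmHat ε Ω) (hfrac : fracPt ε x ∈ Ycube) :
    avgOp ε Ω (unfoldOp ε Ω φ) x = φ x := by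
  have hconst : ∀ z ∈ Ycube, unfoldOp ε Ω φ (floorPt ε x + ε • z, fracPt ε x) = φ x := by
    intro z hz
    rw [unfoldOp, if_pos (cellOf_floor_subset_OmHat hε hx hfrac
      (floorPt_add_smul_mem_cellOf hε x hz)), floorPt_floorPt_add_smul hε.ne' x hz,
      floorPt_add_smul_fracPt hε.ne']
  rw [avgOp, if_pos hx, setIntegral_congr_fun measurableSet_Ycube hconst, setIntegral_const,
    Measure.real, volume_Ycube]
  simp

theorem statement7_general
    (Ω S : Set V3)
    (hScl : IsClosed S) (hSY : S ⊆ Ycube)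
    (ε : ℝ) (hε : 0 < ε)
    (φ : V3 → ℝ) :
    ∀ᵐ x ∂(μH[2].restrict (Seps ε Ω S)), avgOp ε Ω (unfoldOp ε Ω φ) x = φ x := by
  filter_upwards [ae_restrict_mem (measurableSet_Seps ε Ω hScl.measurableSet)] with x hx
  exact avgOp_unfoldOp_apply hε Ω φ hx.1 (hSY hx.2)

/-- The averaging operator `𝒰^b_ε` is a left inverse of the boundary
unfolding operator `T^b_ε`: for every `φ ∈ L^p(S_ε)`, `𝒰^b_ε(T^b_ε(φ)) = φ` a.e. on `S_ε`. -/
theorem statement7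
    (Ω S : Set V3) (hΩo : IsOpen Ω) (hΩb : Bornology.IsBounded Ω)
    (hScl : IsClosed S) (hSY : S ⊆ Ycube)
    (ε : ℝ) (hε : 0 < ε)
    (p : ℝ≥0∞) (hp1 : 1 ≤ p)
    (φ : V3 → ℝ) (hφ : MemLp φ p (μH[2].restrict (Seps ε Ω S))) :
    ∀ᵐ x ∂(μH[2].restrict (Seps ε Ω S)), avgOp ε Ω (unfoldOp ε Ω φ) x = φ x :=
  statement7_general Ω S hScl hSY ε hε φ
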